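/- arXiv:2203.10071 — 2 statements merged into one kernel-verified Lean document; each statement's English description precedes it below -/
import Mathlib

section
/- Let G be a graph and H an attachment set. Then for every n ≥ 1, η(altanⁿ(G,H)) = η(altan(G,H)), i.e., all iterated altans have the same nullity as the first altan. -/
open scoped Classical

/-- The nullity of a graph: dimension of the kernel of its real adjacency matrix. -/
noncomputable def nullity {V : Type*} [Fintype V] (G : SimpleGraph V) : ℕ :=
  letI := Classical.decEq V
  letI := Classical.decRel G.Adj
  Module.finrank ℝ ↥(LinearMap.ker (Matrix.toLin' (G.adjMatrix ℝ)))

/-- `q` is a kernel eigenvector of `G`: the sum of `q` over each neighbourhood is `0`. -/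
def IsKernelVector {V : Type*} [Fintype V] (G : SimpleGraph V) (q : V → ℝ) : Prop :=
  ∀ v : V, ∑ u : V, (if G.Adj v u then q u else 0) = 0

/-- Underlying relation of the altan construction: vertices are `V ⊕ (Fin h ⊕ Fin h)`,
where `Sum.inr (Sum.inl i)` is `x_{i+1}` and `Sum.inr (Sum.inr i)` is `y_{i+1}`
(0-indexed versions of the 1-indexed `x_i, y_i`). -/
def altanRel {V : Type*} {h : ℕ} [NeZero h] (G : SimpleGraph V) (H : Fin h → V) :
    (V ⊕ (Fin h ⊕ Fin h)) → (V ⊕ (Fin h ⊕ Fin h)) → Prop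
  | Sum.inl u, Sum.inl w => G.Adj u w
  | Sum.inl u, Sum.inr (Sum.inl i) => u = H i
  | Sum.inr (Sum.inl i), Sum.inr (Sum.inr j) => j = i ∨ i = j + 1
  | _, _ => False

/-- The altan of `(G, H)`. -/
def altan {V : Type*} {h : ℕ} [NeZero h] (G : SimpleGraph V) (H : Fin h → V) :
    SimpleGraph (V ⊕ (Fin h ⊕ Fin h)) :=
  SimpleGraph.fromRel (altanRel G H)

/-- The special vector: `s(y_i) = (-1)^i` (1-indexed), `0` elsewhere. -/
def specialVector (V : Type*) (h : ℕ) : (V ⊕ (Fin h ⊕ Fin h)) → ℝ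
  | Sum.inr (Sum.inr j) => (-1 : ℝ) ^ ((j : ℕ) + 1)
  | _ => 0

/-- The induced attachment set `H' = (y_1, ..., y_h)` of the altan. -/
def inducedAttachment (V : Type*) (h : ℕ) : Fin h → (V ⊕ (Fin h ⊕ Fin h)) :=
  fun i => Sum.inr (Sum.inr i)

/-- A graph together with an attachment set, closed under the altan construction. -/
structure AltanPair where
  V : Type
  [fV : Fintype V]
  G : SimpleGraph V
  h : ℕ
  h2 : 2 ≤ h
  H : Fin h → V

attribute [instance] AltanPair.fV

/-- One altan step: pass to the altan with the induced attachment set. -/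
def altanStep (P : AltanPair) : AltanPair :=
  haveI : NeZero P.h := ⟨by have := P.h2; omega⟩
  { V := P.V ⊕ (Fin P.h ⊕ Fin P.h)
    G := altan P.G P.H
    h := P.h
    h2 := P.h2
    H := inducedAttachment P.V P.h }

/-- Nullity of the graph of an altan pair. -/
noncomputable def AltanPair.nullity (P : AltanPair) : ℕ := _root_.nullity P.G

/-! In the second altan write a kernel vector as `r` on the first altan, `a` on the new
`x`-vertices and `b` on the new `y`-vertices. The equations at the old and at the new `y`-vertices
make `a` orthogonal to itself, so `a = 0`, and what remains says that `r` is a kernel vector of the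
first altan with `r(y_i) + b_i + b_{i-1} = 0` for all `i`. So the kernel is that of the linear map
`(r, b) ↦ (r(y_i) + b_i + b_{i-1})_i` from `ker × ℝ^h` to `ℝ^h`, and this map is onto: a covector
`f` killing its range satisfies `f_j + f_{j+1} = 0`, so `f` placed on the `y`-vertices is a kernel
vector `r` of the first altan, which forces `f ⬝ᵥ f = 0`. Rank–nullity gives the dimension
`dim ker + h - h`. -/

open Matrix

theorem Fintype.sum_ite_eq_or_eq {α M : Type*} [Fintype α] [DecidableEq α] [AddCommMonoid M]
    {a b : α} (hab : a ≠ b) (f : α → M) :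
    ∑ x, (if x = a ∨ x = b then f x else 0) = f a + f b := by
  rw [← Finset.sum_filter, ← Finset.sum_pair hab]
  congr 1
  ext; simp

section CyclicShift

variable {h : ℕ} [NeZero h]

theorem dotProduct_add_comp_add {R : Type*} [CommSemiring R] (f g : Fin h → R) (k : Fin h) :
    f ⬝ᵥ (fun j => g j + g (j + k)) = (fun j => f j + f (j - k)) ⬝ᵥ g := by
  have shift : f ⬝ᵥ (fun j => g (j + k)) = (fun j => f (j - k)) ⬝ᵥ g :=
    Fintype.sum_equiv (Equiv.addRight k) _ _ (by simp)
  simp only [dotProduct, mul_add, add_mul, Finset.sum_add_distrib] at shift ⊢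
  rw [shift]

variable {R : Type*} [CommRing R] [LinearOrder R] [IsStrictOrderedRing R]

theorem eq_zero_of_add_succ_eq_zero_of_add_succ_add_eq_zero {a c : Fin h → R}
    (ha : ∀ j, a j + a (j + 1) = 0) (hc : ∀ j, c j + c (j + 1) + a j = 0) : a = 0 := by
  have ha' : (fun j => a j + a (j - 1)) = 0 := funext fun j => by
    simpa [add_comm] using ha (j - 1)
  have hac : a = -fun j => c j + c (j + 1) := funext fun j => by
    simp only [Pi.neg_apply]; linear_combination hc j
  rw [← dotProduct_self_eq_zero]
  nth_rewrite 2 [hac]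
  rw [dotProduct_neg, dotProduct_add_comp_add, ha', zero_dotProduct, neg_zero]

theorem add_succ_eq_zero_of_forall_dotProduct_add_pred_eq_zero {f : Fin h → R}
    (hf : ∀ b : Fin h → R, f ⬝ᵥ (fun j => b j + b (j - 1)) = 0) (j : Fin h) :
    f j + f (j + 1) = 0 := by
  have hT : ∀ b : Fin h → R, (fun j => f j + f (j + 1)) ⬝ᵥ b = 0 := fun b => by
    simpa [sub_eq_add_neg, dotProduct_add_comp_add] using hf b
  exact congrFun (dotProduct_self_eq_zero.mp (hT _)) j

end CyclicShift

theorem LinearMap.surjective_of_forall_dotProduct_eq_zero {K M ι : Type*} [Field K]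
    [AddCommGroup M] [Module K M] [Fintype ι] [DecidableEq ι] (Ψ : M →ₗ[K] ι → K)
    (hΨ : ∀ f : ι → K, (∀ m, f ⬝ᵥ Ψ m = 0) → f = 0) : Function.Surjective Ψ := by
  rw [← LinearMap.dualMap_injective_iff, injective_iff_map_eq_zero]
  intro φ hφ
  obtain ⟨f, rfl⟩ := (dotProductEquiv K ι).surjective φ
  rw [hΨ f fun m => LinearMap.congr_fun hφ m, map_zero]

open Sum

section AltanAdj

variable {W : Type*} {h : ℕ} [NeZero h] (A : SimpleGraph W) (K : Fin h → W)

@[simp] theorem altan_adj_inl_inl {u w : W} : (altan A K).Adj (inl u) (inl w) ↔ A.Adj u w := by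
  simp only [altan, SimpleGraph.fromRel_adj, altanRel, ne_eq, inl.injEq]
  constructor
  · rintro ⟨-, hA | hA⟩ <;> [exact hA; exact hA.symm]
  · exact fun hA => ⟨hA.ne, Or.inl hA⟩

@[simp] theorem altan_adj_inl_x {u : W} {i : Fin h} :
    (altan A K).Adj (inl u) (inr (inl i)) ↔ u = K i := by
  simp [altan, altanRel]

@[simp] theorem altan_adj_inl_y {u : W} {j : Fin h} :
    ¬ (altan A K).Adj (inl u) (inr (inr j)) := by
  simp [altan, altanRel]

@[simp] theorem altan_adj_x_x {i j : Fin h} :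
    ¬ (altan A K).Adj (inr (inl i)) (inr (inl j)) := by
  simp [altan, altanRel]

@[simp] theorem altan_adj_y_y {i j : Fin h} :
    ¬ (altan A K).Adj (inr (inr i)) (inr (inr j)) := by
  simp [altan, altanRel]

@[simp] theorem altan_adj_x_y {i j : Fin h} :
    (altan A K).Adj (inr (inl i)) (inr (inr j)) ↔ j = i ∨ j = i - 1 := by
  simp [altan, altanRel, eq_sub_iff_add_eq, eq_comm]

end AltanAdj

section AltanKernel

variable {W : Type*} [Fintype W] {h : ℕ} [NeZero h] (A : SimpleGraph W) (K : Fin h → W)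
  (q : W ⊕ (Fin h ⊕ Fin h) → ℝ)

theorem sum_altan_adj_inl (w : W) :
    ∑ u, (if (altan A K).Adj (inl w) u then q u else 0) =
      (∑ u, if A.Adj w u then q (inl u) else 0) + ∑ i, if w = K i then q (inr (inl i)) else 0 := by
  simp [Fintype.sum_sum_type]

theorem sum_altan_adj_x (hh : 2 ≤ h) (i : Fin h) :
    ∑ u, (if (altan A K).Adj (inr (inl i)) u then q u else 0) =
      q (inl (K i)) + (q (inr (inr i)) + q (inr (inr (i - 1)))) := by
  simp only [Fintype.sum_sum_type, altan_adj_x_x, altan_adj_x_y, if_false, Finset.sum_const_zero,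
    zero_add]
  rw [Fintype.sum_ite_eq_or_eq (by simp; omega : i - 1 ≠ i).symm]
  simp [SimpleGraph.adj_comm (altan A K) (inr (inl i)) (inl _)]

theorem sum_altan_adj_y (hh : 2 ≤ h) (j : Fin h) :
    ∑ u, (if (altan A K).Adj (inr (inr j)) u then q u else 0) =
      q (inr (inl j)) + q (inr (inl (j + 1))) := by
  simp only [Fintype.sum_sum_type, SimpleGraph.adj_comm (altan A K) (inr (inr j)), altan_adj_inl_y,
    altan_adj_y_y, altan_adj_x_y, if_false, Finset.sum_const_zero, zero_add, add_zero]
  have hnbr : ∀ i : Fin h, (j = i ∨ j = i - 1) ↔ (i = j ∨ i = j + 1) := fun i => by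
    rw [eq_sub_iff_add_eq, eq_comm, eq_comm (a := j + 1)]
  simp_rw [hnbr]
  exact Fintype.sum_ite_eq_or_eq (by simp; omega : j + 1 ≠ j).symm _

theorem isKernelVector_altan_iff (hh : 2 ≤ h) :
    IsKernelVector (altan A K) q ↔
      (∀ w, (∑ u, if A.Adj w u then q (inl u) else 0) +
          ∑ i, (if w = K i then q (inr (inl i)) else 0) = 0) ∧
      (∀ i, q (inl (K i)) + (q (inr (inr i)) + q (inr (inr (i - 1)))) = 0) ∧
      ∀ j, q (inr (inl j)) + q (inr (inl (j + 1))) = 0 := by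
  simp only [IsKernelVector, Sum.forall, sum_altan_adj_inl, sum_altan_adj_x A K q hh,
    sum_altan_adj_y A K q hh]

end AltanKernel

noncomputable def adjKernel {V : Type*} [Fintype V] (G : SimpleGraph V) : Submodule ℝ (V → ℝ) :=
  letI := Classical.decEq V
  letI := Classical.decRel G.Adj
  LinearMap.ker (Matrix.toLin' (G.adjMatrix ℝ))

theorem nullity_eq_finrank_adjKernel {V : Type*} [Fintype V] (G : SimpleGraph V) :
    nullity G = Module.finrank ℝ (adjKernel G) := rfl

theorem mem_adjKernel {V : Type*} [Fintype V] {G : SimpleGraph V} {q : V → ℝ} :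
    q ∈ adjKernel G ↔ IsKernelVector G q := by
  simp [adjKernel, IsKernelVector, funext_iff, Matrix.mulVec, dotProduct,
    SimpleGraph.adjMatrix_apply, ite_mul]

section SecondAltan

variable {V : Type*} [Fintype V] {h : ℕ} [NeZero h] (G : SimpleGraph V) (H : Fin h → V)

theorem isKernelVector_altan_altan_iff (hh : 2 ≤ h)
    (q : (V ⊕ (Fin h ⊕ Fin h)) ⊕ (Fin h ⊕ Fin h) → ℝ) :
    IsKernelVector (altan (altan G H) (inducedAttachment V h)) q ↔
      IsKernelVector (altan G H) (q ∘ inl) ∧ (∀ j, q (inr (inl j)) = 0) ∧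
      ∀ i, q (inl (inr (inr i))) + (q (inr (inr i)) + q (inr (inr (i - 1)))) = 0 := by
  rw [isKernelVector_altan_iff _ _ _ hh]
  simp only [inducedAttachment]
  constructor
  · rintro ⟨hW, hX, hY⟩
    have hx' : (fun j => q (inr (inl j))) = 0 := by
      refine eq_zero_of_add_succ_eq_zero_of_add_succ_add_eq_zero hY
        (c := fun j => q (inl (inr (inl j)))) fun j => ?_
      simpa [sum_altan_adj_y G H _ hh] using hW (inr (inr j))
    have hx'_apply : ∀ j, q (inr (inl j)) = 0 := congrFun hx'
    exact ⟨fun w => by simpa [hx'_apply] using hW w, hx'_apply, hX⟩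
  · rintro ⟨hA, hX, hY⟩
    exact ⟨fun w => by simpa [hX] using hA w, hY, fun j => by simp [hX]⟩

noncomputable def attachmentDefect :
    adjKernel (altan G H) × (Fin h → ℝ) →ₗ[ℝ] Fin h → ℝ where
  toFun p i := p.1.1 (inr (inr i)) + (p.2 i + p.2 (i - 1))
  map_add' p p' := by
    ext i
    simp only [Prod.fst_add, Prod.snd_add, Submodule.coe_add, Pi.add_apply]
    ring
  map_smul' c p := by
    ext i
    simp only [Prod.smul_fst, Prod.smul_snd, Submodule.coe_smul, Pi.smul_apply, smul_eq_mul,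
      RingHom.id_apply]
    ring

theorem attachmentDefect_apply (p : adjKernel (altan G H) × (Fin h → ℝ)) :
    attachmentDefect G H p = fun i => p.1.1 (inr (inr i)) + (p.2 i + p.2 (i - 1)) := rfl

noncomputable def adjKernelAltanAltanEquiv (hh : 2 ≤ h) :
    adjKernel (altan (altan G H) (inducedAttachment V h)) ≃ₗ[ℝ]
      LinearMap.ker (attachmentDefect G H) where
  toFun q := ⟨(⟨q.1 ∘ inl, mem_adjKernel.mpr ((isKernelVector_altan_altan_iff G H hh q.1).mp
      (mem_adjKernel.mp q.2)).1⟩, fun j => q.1 (inr (inr j))), by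
    ext i
    exact ((isKernelVector_altan_altan_iff G H hh q.1).mp (mem_adjKernel.mp q.2)).2.2 i⟩
  invFun p := ⟨Sum.elim p.1.1.1 (Sum.elim 0 p.1.2), by
    rw [mem_adjKernel, isKernelVector_altan_altan_iff G H hh]
    exact ⟨mem_adjKernel.mp p.1.1.2, fun _ => rfl, fun i => congrFun p.2 i⟩⟩
  map_add' _ _ := rfl
  map_smul' _ _ := rfl
  left_inv q := by
    have hx' := ((isKernelVector_altan_altan_iff G H hh q.1).mp (mem_adjKernel.mp q.2)).2.1
    ext (w | j | j) <;> simp [hx']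
  right_inv _ := rfl

theorem attachmentDefect_surjective (hh : 2 ≤ h) : Function.Surjective (attachmentDefect G H) := by
  refine LinearMap.surjective_of_forall_dotProduct_eq_zero _ fun f hf => ?_
  have hf_succ : ∀ j, f j + f (j + 1) = 0 :=
    add_succ_eq_zero_of_forall_dotProduct_add_pred_eq_zero fun b => by
      simpa [attachmentDefect_apply] using hf (0, b)
  have hmem : Sum.elim (0 : V → ℝ) (Sum.elim (0 : Fin h → ℝ) f) ∈ adjKernel (altan G H) := by
    rw [mem_adjKernel, isKernelVector_altan_iff _ _ _ hh]
    refine ⟨fun w => by simp, fun i => ?_, fun j => by simp⟩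
    simpa [add_comm] using hf_succ (i - 1)
  simpa [attachmentDefect_apply] using hf (⟨_, hmem⟩, 0)

theorem nullity_altan_altan (hh : 2 ≤ h) :
    nullity (altan (altan G H) (inducedAttachment V h)) = nullity (altan G H) := by
  have hrank := (attachmentDefect G H).finrank_range_add_finrank_ker
  rw [LinearMap.range_eq_top.mpr (attachmentDefect_surjective G H hh), finrank_top,
    Module.finrank_prod, Module.finrank_fin_fun] at hrank
  rw [nullity_eq_finrank_adjKernel, nullity_eq_finrank_adjKernel,
    (adjKernelAltanAltanEquiv G H hh).finrank_eq]
  omega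

end SecondAltan

theorem AltanPair.nullity_altanStep_altanStep (P : AltanPair) :
    (altanStep (altanStep P)).nullity = (altanStep P).nullity :=
  haveI : NeZero P.h := ⟨by have := P.h2; omega⟩
  nullity_altan_altan P.G P.H P.h2

/-- all iterated altans (n ≥ 1) have the same nullity as the first altan. -/
theorem stmt13 (P : AltanPair) (n : ℕ) (hn : 1 ≤ n) :
    (altanStep^[n] P).nullity = (altanStep P).nullity := by
  induction n, hn using Nat.le_induction with
  | base => rfl
  | succ n hn ih =>
    obtain ⟨k, rfl⟩ := Nat.exists_eq_add_of_le' hn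
    rw [Function.iterate_succ_apply', Function.iterate_succ_apply',
      AltanPair.nullity_altanStep_altanStep, ← Function.iterate_succ_apply' altanStep, ih]
end

section
/- Let (G'',H'') = altan²(G,H) with |H| = h even, with perimeter vertices x'_1,...,x'_h, y'_1,...,y'_h of the outermost cycle (so that N(x'_i) = {y'_{i-1}, y_i, y'_i}, indices mod h). If q is a kernel eigenvector of G'', then q(x'_i) = 0 for all 1 ≤ i ≤ h. -/
open scoped Classical

/-! The kernel condition at `y'_i` gives `q(x'_i) + q(x'_{i+1}) = 0`, so `(-1)^i q(x'_i)` is a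
constant `c`. The condition at `y_i` reads `q(x_i) + q(x_{i+1}) + q(x'_i) = 0`; multiplied by
`(-1)^i` and summed over `i`, the `x`-terms cancel because `h` is even, leaving `h c = 0`. -/

open Finset

section Cyclic

variable {h : ℕ} [NeZero h]

theorem Fin.self_ne_add_one (hh : h ≠ 1) (i : Fin h) : i ≠ i + 1 :=
  left_ne_add.mpr (Fin.one_eq_zero_iff.not.mpr hh)

theorem Fin.neg_one_pow_val_add_one {R : Type*} [Monoid R] [HasDistribNeg R] (heven : Even h)
    (i : Fin h) : (-1 : R) ^ ((i + 1 : Fin h) : ℕ) = -(-1) ^ (i : ℕ) := by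
  obtain ⟨n, rfl⟩ : ∃ n, h = n + 1 := Nat.exists_eq_succ_of_ne_zero (NeZero.ne h)
  rw [Fin.val_add_one]
  split_ifs with hi
  · have hn : Odd n := by simpa [Nat.even_add_one] using heven
    simp [hi, hn.neg_one_pow]
  · rw [pow_succ, mul_neg_one]

theorem Fin.sum_neg_one_pow_mul_add_add_one {R : Type*} [CommRing R] (heven : Even h)
    (b : Fin h → R) : ∑ i : Fin h, (-1) ^ (i : ℕ) * (b i + b (i + 1)) = 0 := by
  have hshift : ∑ i : Fin h, (-1 : R) ^ ((i + 1 : Fin h) : ℕ) * b (i + 1) =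
      ∑ i : Fin h, (-1) ^ (i : ℕ) * b i :=
    Fintype.sum_equiv (Equiv.addRight 1) _ _ fun _ ↦ rfl
  simp only [Fin.neg_one_pow_val_add_one heven, neg_mul, sum_neg_distrib] at hshift
  simp only [mul_add, sum_add_distrib]
  linear_combination -hshift

open Fin.NatCast in
theorem Fin.apply_eq_apply_zero_of_apply_add_one {α : Type*} {f : Fin h → α}
    (hf : ∀ i, f (i + 1) = f i) (i : Fin h) : f i = f 0 := by
  suffices ∀ n : ℕ, f n = f 0 by simpa using this i
  intro n
  induction n with
  | zero => simp
  | succ n ih => rw [Nat.cast_succ, hf, ih]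

theorem Fin.eq_zero_of_add_add_one_eq_zero {R : Type*} [CommRing R] [NoZeroDivisors R]
    [CharZero R] (heven : Even h) {a b : Fin h → R} (ha : ∀ i, a i + a (i + 1) = 0)
    (hb : ∀ i, b i + b (i + 1) + a i = 0) (i : Fin h) : a i = 0 := by
  set c : Fin h → R := fun i ↦ (-1) ^ (i : ℕ) * a i
  have hc : ∀ i, c i = a 0 := by
    intro i
    rw [Fin.apply_eq_apply_zero_of_apply_add_one (f := c) ?_ i]
    · simp [c]
    · intro j
      simp only [c, Fin.neg_one_pow_val_add_one heven]
      linear_combination (-(-1 : R) ^ (j : ℕ)) * ha j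
  have hsum : (h : R) * a 0 = 0 :=
    calc (h : R) * a 0 = ∑ i, c i := by simp [hc]
      _ = ∑ i : Fin h, (-1) ^ (i : ℕ) * (b i + b (i + 1) + a i)
          - ∑ i : Fin h, (-1) ^ (i : ℕ) * (b i + b (i + 1)) := by
        simp only [c, mul_add, sum_add_distrib]; ring
      _ = 0 := by simp [hb, Fin.sum_neg_one_pow_mul_add_add_one heven]
  have ha0 : a 0 = 0 := (mul_eq_zero.mp hsum).resolve_left (Nat.cast_ne_zero.mpr (NeZero.ne h))
  simpa [c, ha0] using hc i

end Cyclic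

theorem IsKernelVector.sum_eq_zero {V : Type*} [Fintype V] {G : SimpleGraph V} {q : V → ℝ}
    (hq : IsKernelVector G q) (v : V) {s : Finset V} (hs : ∀ u, G.Adj v u ↔ u ∈ s) :
    ∑ u ∈ s, q u = 0 := by
  rw [← hq v, ← sum_filter]
  congr
  ext u
  simp [hs]

section Altan

variable {V : Type*} {h : ℕ} [NeZero h] {G : SimpleGraph V} {H : Fin h → V}

@[simp]
theorem altan_adj_inl_inl_s14 {v w : V} : (altan G H).Adj (.inl v) (.inl w) ↔ G.Adj v w := by
  simpa [altan, altanRel, G.adj_comm w v] using SimpleGraph.Adj.ne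

@[simp]
theorem altan_adj_inl_inr_inl {v : V} {i : Fin h} :
    (altan G H).Adj (.inl v) (.inr (.inl i)) ↔ v = H i := by
  simp [altan, altanRel]

@[simp]
theorem altan_not_adj_inl_inr_inr {v : V} {j : Fin h} :
    ¬ (altan G H).Adj (.inl v) (.inr (.inr j)) := by
  simp [altan, altanRel]

theorem altan_adj_inr_inr_iff (j : Fin h) (u : V ⊕ (Fin h ⊕ Fin h)) :
    (altan G H).Adj (.inr (.inr j)) u ↔ u = .inr (.inl j) ∨ u = .inr (.inl (j + 1)) := by
  rcases u with v | i | i <;> simp [altan, altanRel, eq_comm]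

theorem altan_altan_adj_inl_inr_inr_iff (i : Fin h)
    (u : (V ⊕ (Fin h ⊕ Fin h)) ⊕ (Fin h ⊕ Fin h)) :
    (altan (altan G H) (inducedAttachment V h)).Adj (.inl (.inr (.inr i))) u ↔
      u = .inr (.inl i) ∨ u = .inl (.inr (.inl i)) ∨ u = .inl (.inr (.inl (i + 1))) := by
  rcases u with v | k | k <;>
    simp [altan_adj_inr_inr_iff, inducedAttachment, eq_comm]

variable [Fintype V]

theorem IsKernelVector.altan_add_add_one (hh : h ≠ 1) {q : V ⊕ (Fin h ⊕ Fin h) → ℝ}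
    (hq : IsKernelVector (altan G H) q) (j : Fin h) :
    q (.inr (.inl j)) + q (.inr (.inl (j + 1))) = 0 := by
  have hne : (.inr (.inl j) : V ⊕ (Fin h ⊕ Fin h)) ≠ .inr (.inl (j + 1)) := by
    simpa using Fin.self_ne_add_one hh j
  rw [← sum_pair hne]
  exact hq.sum_eq_zero (.inr (.inr j)) fun u ↦ by simp [altan_adj_inr_inr_iff]

theorem IsKernelVector.altan_altan_add_add_one (hh : h ≠ 1)
    {q : (V ⊕ (Fin h ⊕ Fin h)) ⊕ (Fin h ⊕ Fin h) → ℝ}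
    (hq : IsKernelVector (altan (altan G H) (inducedAttachment V h)) q) (i : Fin h) :
    q (.inl (.inr (.inl i))) + q (.inl (.inr (.inl (i + 1)))) + q (.inr (.inl i)) = 0 := by
  have hne : (.inl (.inr (.inl i)) : (V ⊕ (Fin h ⊕ Fin h)) ⊕ (Fin h ⊕ Fin h)) ≠
      .inl (.inr (.inl (i + 1))) := by
    simpa using Fin.self_ne_add_one hh i
  rw [add_comm, ← sum_pair hne, ← sum_insert (by simp)]
  exact hq.sum_eq_zero (.inl (.inr (.inr i))) fun u ↦ by
    simp [altan_altan_adj_inl_inr_inr_iff]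

end Altan

theorem stmt14_general {V : Type*} [Fintype V] {h : ℕ} [NeZero h] (heven : Even h)
    (G : SimpleGraph V) (H : Fin h → V)
    (q : ((V ⊕ (Fin h ⊕ Fin h)) ⊕ (Fin h ⊕ Fin h)) → ℝ)
    (hq : IsKernelVector (altan (altan G H) (inducedAttachment V h)) q) :
    ∀ i : Fin h, q (Sum.inr (Sum.inl i)) = 0 := by
  have hh : h ≠ 1 := by
    rintro rfl
    exact Nat.not_even_one heven
  exact Fin.eq_zero_of_add_add_one_eq_zero heven (hq.altan_add_add_one hh)
    (hq.altan_altan_add_add_one hh)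

/-- for even attachment size, a kernel eigenvector of the second iterated
altan vanishes on all outermost perimeter vertices `x'_i`. -/
theorem stmt14 {V : Type*} [Fintype V] {h : ℕ} [NeZero h] (hh : 2 ≤ h) (heven : Even h)
    (G : SimpleGraph V) (H : Fin h → V)
    (q : ((V ⊕ (Fin h ⊕ Fin h)) ⊕ (Fin h ⊕ Fin h)) → ℝ)
    (hq : IsKernelVector (altan (altan G H) (inducedAttachment V h)) q) :
    ∀ i : Fin h, q (Sum.inr (Sum.inl i)) = 0 :=
  stmt14_general heven G H q hq
end
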